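/- arXiv:1504.06029 — 6 statements merged into one kernel-verified Lean document; each statement's English description precedes it below -/
import Mathlib

section
/- (Wolf–Ziv decomposition) For jointly distributed X in R^n, Y in R^p with E||Y||^2 < ∞, and any integer k ≥ 1, inf over k-ary quantizers q : R^n → {1,...,k} and reconstruction maps f : {1,...,k} → R^p of E||Y - f(q(X))||^2 equals E||Y - E[Y|X]||^2 plus inf over k-ary quantizers q of E||E[Y|X] - E[Y|q(X)]||^2. -/
/-!
Conditioning on `σ(X)` is the orthogonal projection of `L²` onto the `σ(X)`-measurable functions,
so for any `W` in that subspace `E‖Y - W‖² = E‖Y - E[Y|X]‖² + E‖E[Y|X] - W‖²`. For a fixed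
quantizer `q`, every `f ∘ q ∘ X` is `σ(q ∘ X)`-measurable, so the best reconstruction error is
`E‖Y - E[Y|q(X)]‖²`, attained because `E[Y|q(X)]` factors through `q ∘ X`. Since
`σ(q ∘ X) ≤ σ(X)`, Pythagoras splits this error as `E‖Y - E[Y|X]‖² + E‖E[Y|X] - E[Y|q(X)]‖²`,
and the first term does not depend on `q`.
-/

open MeasureTheory
open scoped ENNReal

theorem Submodule.norm_sub_sq_eq_norm_sub_starProjection_sq_add {𝕜 F : Type*} [RCLike 𝕜]
    [NormedAddCommGroup F] [InnerProductSpace 𝕜 F] (K : Submodule 𝕜 F)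
    [K.HasOrthogonalProjection] (v : F) {w : F} (hw : w ∈ K) :
    ‖v - w‖ ^ 2 = ‖v - K.starProjection v‖ ^ 2 + ‖K.starProjection v - w‖ ^ 2 := by
  have h := K.starProjection_inner_eq_zero v _ (K.sub_mem (K.starProjection_apply_mem v) hw)
  rw [← sub_add_sub_cancel v (K.starProjection v) w, sq, sq, sq,
    norm_add_sq_eq_norm_sq_add_norm_sq_of_inner_eq_zero _ _ h]

section Pythagoras

variable {Ω E : Type*} [NormedAddCommGroup E] [InnerProductSpace ℝ E]
  {m m₀ : MeasurableSpace Ω} {μ : Measure Ω}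

theorem integral_norm_sub_sq_eq_norm_sub_sq {F G : Lp E 2 μ} {u v : Ω → E}
    (hu : u =ᵐ[μ] F) (hv : v =ᵐ[μ] G) :
    ∫ ω, ‖u ω - v ω‖ ^ 2 ∂μ = ‖F - G‖ ^ 2 := by
  rw [← real_inner_self_eq_norm_sq, L2.inner_def]
  refine integral_congr_ae ?_
  filter_upwards [hu, hv, Lp.coeFn_sub F G] with ω hu hv hsub
  rw [hsub, Pi.sub_apply, hu, hv, real_inner_self_eq_norm_sq]

variable [CompleteSpace E]

theorem integral_norm_sub_sq_eq_add_condExp [IsFiniteMeasure μ] (hm : m ≤ m₀) {Y W : Ω → E}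
    (hY : MemLp Y 2 μ) (hW : MemLp W 2 μ) (hWm : AEStronglyMeasurable[m] W μ) :
    ∫ ω, ‖Y ω - W ω‖ ^ 2 ∂μ
      = ∫ ω, ‖Y ω - μ[Y|m] ω‖ ^ 2 ∂μ + ∫ ω, ‖μ[Y|m] ω - W ω‖ ^ 2 ∂μ := by
  have : Fact (m ≤ m₀) := ⟨hm⟩
  have hcond := (hY.condExpL2_ae_eq_condExp (𝕜 := ℝ) hm).symm
  have hWmem : hW.toLp W ∈ lpMeas E ℝ m 2 μ :=
    mem_lpMeas_iff_aestronglyMeasurable.mpr (hWm.congr hW.coeFn_toLp.symm)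
  rw [integral_norm_sub_sq_eq_norm_sub_sq hY.coeFn_toLp.symm hW.coeFn_toLp.symm,
    integral_norm_sub_sq_eq_norm_sub_sq hY.coeFn_toLp.symm hcond,
    integral_norm_sub_sq_eq_norm_sub_sq hcond hW.coeFn_toLp.symm]
  exact (lpMeas E ℝ m 2 μ).norm_sub_sq_eq_norm_sub_starProjection_sq_add _ hWmem

theorem integral_norm_sub_condExp_sq_eq_add [IsFiniteMeasure μ] {m' : MeasurableSpace Ω}
    (hm' : m' ≤ m) (hm : m ≤ m₀) {Y : Ω → E} (hY : MemLp Y 2 μ) :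
    ∫ ω, ‖Y ω - μ[Y|m'] ω‖ ^ 2 ∂μ
      = ∫ ω, ‖Y ω - μ[Y|m] ω‖ ^ 2 ∂μ + ∫ ω, ‖μ[Y|m] ω - μ[Y|m'] ω‖ ^ 2 ∂μ :=
  integral_norm_sub_sq_eq_add_condExp hm hY (hY.condExp one_le_two)
    (stronglyMeasurable_condExp.mono hm').aestronglyMeasurable

end Pythagoras

section Quantization

variable {Ω ι E : Type*} [NormedAddCommGroup E] [MeasurableSpace ι] [DiscreteMeasurableSpace ι]
  [Finite ι] {m₀ : MeasurableSpace Ω} {μ : Measure Ω} [IsFiniteMeasure μ] {T : Ω → ι}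

theorem memLp_comp_of_finite (hT : Measurable T) (f : ι → E) (p : ℝ≥0∞) :
    MemLp (fun ω ↦ f (T ω)) p μ := by
  obtain ⟨C, hC⟩ := Finite.bddAbove_range fun i ↦ ‖f i‖
  exact MemLp.of_bound (StronglyMeasurable.of_discrete.comp_measurable hT).aestronglyMeasurable C
    (.of_forall fun ω ↦ hC ⟨T ω, rfl⟩)

variable [InnerProductSpace ℝ E] [CompleteSpace E]

theorem iInf_integral_norm_sub_comp_sq (hT : Measurable T) {Y : Ω → E} (hY : MemLp Y 2 μ) :
    ⨅ f : ι → E, ∫ ω, ‖Y ω - f (T ω)‖ ^ 2 ∂μ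
      = ∫ ω, ‖Y ω - μ[Y | MeasurableSpace.comap T inferInstance] ω‖ ^ 2 ∂μ := by
  set mT := MeasurableSpace.comap T inferInstance
  obtain ⟨f₀, -, hf₀⟩ :=
    (stronglyMeasurable_condExp (m := mT) (f := Y) (μ := μ)).exists_eq_measurable_comp
  have hle : ∀ f : ι → E, ∫ ω, ‖Y ω - μ[Y|mT] ω‖ ^ 2 ∂μ ≤ ∫ ω, ‖Y ω - f (T ω)‖ ^ 2 ∂μ := by
    intro f
    rw [integral_norm_sub_sq_eq_add_condExp hT.comap_le hY (memLp_comp_of_finite hT f 2)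
      (StronglyMeasurable.of_discrete.comp_measurable (comap_measurable T)).aestronglyMeasurable]
    exact le_add_of_nonneg_right (integral_nonneg fun ω ↦ by positivity)
  refine le_antisymm ?_ (le_ciInf hle)
  refine ciInf_le_of_le ⟨_, Set.forall_mem_range.2 hle⟩ f₀ (le_of_eq ?_)
  rw [hf₀]
  rfl

end Quantization

theorem stmt1_general {Ω : Type*} [MeasurableSpace Ω] (μ : Measure Ω) [IsProbabilityMeasure μ]
    {n p k : ℕ} (hk : 0 < k)
    (X : Ω → EuclideanSpace ℝ (Fin n)) (Y : Ω → EuclideanSpace ℝ (Fin p))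
    (hX : Measurable X) (hY2 : MemLp Y 2 μ) :
    (⨅ q : {q : EuclideanSpace ℝ (Fin n) → Fin k // Measurable q},
      ⨅ f : Fin k → EuclideanSpace ℝ (Fin p),
        ∫ ω, ‖Y ω - f (q.1 (X ω))‖ ^ 2 ∂μ)
    = (∫ ω, ‖Y ω - (μ[Y | MeasurableSpace.comap X inferInstance]) ω‖ ^ 2 ∂μ)
      + ⨅ q : {q : EuclideanSpace ℝ (Fin n) → Fin k // Measurable q},
          ∫ ω, ‖(μ[Y | MeasurableSpace.comap X inferInstance]) ω
            - (μ[Y | MeasurableSpace.comap (fun ω => q.1 (X ω)) inferInstance]) ω‖ ^ 2 ∂μ := by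
  have : Nonempty {q : EuclideanSpace ℝ (Fin n) → Fin k // Measurable q} :=
    ⟨⟨fun _ ↦ ⟨0, hk⟩, measurable_const⟩⟩
  have hq : ∀ q : {q : EuclideanSpace ℝ (Fin n) → Fin k // Measurable q},
      ⨅ f : Fin k → EuclideanSpace ℝ (Fin p), ∫ ω, ‖Y ω - f (q.1 (X ω))‖ ^ 2 ∂μ
        = (∫ ω, ‖Y ω - (μ[Y | MeasurableSpace.comap X inferInstance]) ω‖ ^ 2 ∂μ)
          + ∫ ω, ‖(μ[Y | MeasurableSpace.comap X inferInstance]) ω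
            - (μ[Y | MeasurableSpace.comap (fun ω => q.1 (X ω)) inferInstance]) ω‖ ^ 2 ∂μ :=
    fun q ↦ (iInf_integral_norm_sub_comp_sq (q.2.comp hX) hY2).trans <|
      integral_norm_sub_condExp_sq_eq_add (q.2.comp (comap_measurable X)).comap_le hX.comap_le hY2
  rw [iInf_congr hq,
    add_ciInf ⟨0, Set.forall_mem_range.2 fun q ↦ integral_nonneg fun ω ↦ by positivity⟩]

/-- Wolf–Ziv decomposition: the minimum quantized MSE over k-ary quantizer /
reconstruction pairs equals the unquantized MMSE plus the MMSE regret. -/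
theorem stmt1 {Ω : Type*} [MeasurableSpace Ω] (μ : Measure Ω) [IsProbabilityMeasure μ]
    {n p k : ℕ} (hk : 0 < k)
    (X : Ω → EuclideanSpace ℝ (Fin n)) (Y : Ω → EuclideanSpace ℝ (Fin p))
    (hX : Measurable X) (hY : Measurable Y) (hY2 : MemLp Y 2 μ) :
    (⨅ q : {q : EuclideanSpace ℝ (Fin n) → Fin k // Measurable q},
      ⨅ f : Fin k → EuclideanSpace ℝ (Fin p),
        ∫ ω, ‖Y ω - f (q.1 (X ω))‖ ^ 2 ∂μ)
    = (∫ ω, ‖Y ω - (μ[Y | MeasurableSpace.comap X inferInstance]) ω‖ ^ 2 ∂μ)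
      + ⨅ q : {q : EuclideanSpace ℝ (Fin n) → Fin k // Measurable q},
          ∫ ω, ‖(μ[Y | MeasurableSpace.comap X inferInstance]) ω
            - (μ[Y | MeasurableSpace.comap (fun ω => q.1 (X ω)) inferInstance]) ω‖ ^ 2 ∂μ :=
  stmt1_general μ hk X Y hX hY2
end

section
/- (Ephraim–Gray reduction) The MMSE regret reg_k = inf over k-ary quantizers q on R^n of E||η(X) - E[η(X)|q(X)]||^2 equals inf over codebooks C ⊂ R^p, |C| = k, of E||η(X) - q_C(η(X))||^2, where η(X) = E[Y|X]. -/
/-!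
For a quantizer `q`, the estimate `E[η | q(X)]` is a function of `q(X)`, so it takes at most `k`
values; any codebook of size `k` containing them does at least as well pointwise. Conversely, since
`η` is `σ(X)`-measurable it factors through `X` (Doob–Dynkin), so the nearest-neighbour map of a
codebook applied to `η` is a quantizer of `X`; the conditional expectation, being the `L²`
projection onto `σ(q(X))`-measurable functions, beats the `σ(q(X))`-measurable codeword `q_C(η)`.
-/

open MeasureTheory

namespace MeasureTheory

section L2
variable {α E : Type*} {m m₀ : MeasurableSpace α} {μ : Measure α}
  [NormedAddCommGroup E] [InnerProductSpace ℝ E]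

theorem L2.norm_sq_eq_integral_norm_sq (f : α →₂[μ] E) : ‖f‖ ^ 2 = ∫ a, ‖f a‖ ^ 2 ∂μ := by
  rw [← real_inner_self_eq_norm_sq, L2.inner_def]
  simp_rw [real_inner_self_eq_norm_sq]

theorem MemLp.integral_norm_sub_sq_eq {f g : α → E} (hf : MemLp f 2 μ) (hg : MemLp g 2 μ) :
    ∫ a, ‖f a - g a‖ ^ 2 ∂μ = ‖hf.toLp f - hg.toLp g‖ ^ 2 := by
  rw [← hf.toLp_sub hg, L2.norm_sq_eq_integral_norm_sq]
  refine integral_congr_ae ?_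
  filter_upwards [(hf.sub hg).coeFn_toLp] with a ha
  rw [ha, Pi.sub_apply]

theorem integral_norm_sub_condExp_sq_le [CompleteSpace E] [IsFiniteMeasure μ] (hm : m ≤ m₀)
    {f g : α → E} (hf : MemLp f 2 μ) (hg : MemLp g 2 μ) (hgm : AEStronglyMeasurable[m] g μ) :
    ∫ a, ‖f a - μ[f | m] a‖ ^ 2 ∂μ ≤ ∫ a, ‖f a - g a‖ ^ 2 ∂μ := by
  have hP : (hf.condExp one_le_two).toLp (μ[f | m]) = condExpL2 E ℝ hm (hf.toLp f) := by
    rw [← Lp.toLp_coeFn _ (Lp.memLp (condExpL2 E ℝ hm (hf.toLp f) : α →₂[μ] E))]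
    exact MemLp.toLp_congr _ _ (hf.condExpL2_ae_eq_condExp hm).symm
  have : Fact (m ≤ m₀) := ⟨hm⟩
  have hG : hg.toLp g ∈ lpMeas E ℝ m 2 μ :=
    mem_lpMeas_iff_aestronglyMeasurable.2 (hgm.congr hg.coeFn_toLp.symm)
  rw [hf.integral_norm_sub_sq_eq (hf.condExp one_le_two), hf.integral_norm_sub_sq_eq hg, hP]
  gcongr
  calc _ = ⨅ x : lpMeas E ℝ m 2 μ, ‖hf.toLp f - x‖ := Submodule.starProjection_minimal _
    _ ≤ _ := ciInf_le ⟨0, Set.forall_mem_range.2 fun _ => norm_nonneg _⟩ ⟨_, hG⟩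

end L2

theorem exists_measurable_nearest {E : Type*} [PseudoMetricSpace E] [MeasurableSpace E]
    [OpensMeasurableSpace E] {k : ℕ} [NeZero k] (c : Fin k → E) :
    ∃ φ : E → Fin k, Measurable φ ∧ ∀ y j, dist y (c (φ y)) ≤ dist y (c j) := by
  set e : ℕ → E := fun i => c (Fin.ofNat k i)
  refine ⟨fun y => Fin.ofNat k (SimpleFunc.nearestPtInd e (k - 1) y),
    (measurable_from_nat (f := Fin.ofNat k)).comp (SimpleFunc.measurable _), fun y j => ?_⟩
  have := SimpleFunc.edist_nearestPt_le e y (Nat.le_sub_one_of_lt j.isLt)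
  simpa [SimpleFunc.nearestPt, e, edist_dist, dist_comm] using this

section Quantization
variable {Ω E : Type*} [MeasurableSpace Ω] {μ : Measure Ω} [NormedAddCommGroup E]

theorem exists_quantizer_integral_norm_sub_condExp_sq_le {β : Type*} [InnerProductSpace ℝ E]
    [CompleteSpace E] [IsFiniteMeasure μ] [MeasurableSpace E] [BorelSpace E]
    [mβ : MeasurableSpace β] {X : Ω → β} (hX : Measurable X)
    {η : Ω → E} (hηX : StronglyMeasurable[mβ.comap X] η) (hη : MemLp η 2 μ)
    {k : ℕ} [NeZero k] (c : Fin k → E) :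
    ∃ q : β → Fin k, Measurable q ∧
      ∫ ω, ‖η ω - μ[η | MeasurableSpace.comap (fun ω => q (X ω)) inferInstance] ω‖ ^ 2 ∂μ
        ≤ ∫ ω, ⨅ j, ‖η ω - c j‖ ^ 2 ∂μ := by
  obtain ⟨g, hg, rfl⟩ := hηX.exists_eq_measurable_comp
  obtain ⟨φ, hφ, hφc⟩ := exists_measurable_nearest c
  have hq : Measurable (φ ∘ g) := hφ.comp hg.measurable
  refine ⟨φ ∘ g, hq, ?_⟩
  set Z : Ω → Fin k := fun ω => φ (g (X ω))
  have hZ : Measurable Z := hq.comp hX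
  have hcZ : StronglyMeasurable[MeasurableSpace.comap Z inferInstance] (c ∘ Z) :=
    StronglyMeasurable.of_discrete.comp_measurable (Measurable.of_comap_le le_rfl)
  have hcZ2 : MemLp (c ∘ Z) 2 μ :=
    MemLp.of_bound (hcZ.mono hZ.comap_le).aestronglyMeasurable (∑ j, ‖c j‖)
      (ae_of_all _ fun ω => Finset.single_le_sum (f := fun j => ‖c j‖)
        (fun j _ => norm_nonneg _) (Finset.mem_univ _))
  calc _ ≤ ∫ ω, ‖g (X ω) - c (Z ω)‖ ^ 2 ∂μ :=
        integral_norm_sub_condExp_sq_le hZ.comap_le hη hcZ2 hcZ.aestronglyMeasurable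
    _ = ∫ ω, ⨅ j, ‖g (X ω) - c j‖ ^ 2 ∂μ := by
      congr with ω
      refine le_antisymm (le_ciInf fun j => ?_) (ciInf_le ⟨0, ?_⟩ (Z ω))
      · simpa [dist_eq_norm] using pow_le_pow_left₀ dist_nonneg (hφc (g (X ω)) j) 2
      · exact Set.forall_mem_range.2 fun _ => sq_nonneg _

theorem exists_finset_card_le_forall_condExp_mem [NormedSpace ℝ E] [CompleteSpace E]
    {ι : Type*} [MeasurableSpace ι] [Fintype ι]
    (Z : Ω → ι) (f : Ω → E) :
    ∃ s : Finset E, s.card ≤ Fintype.card ι ∧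
      ∀ ω, μ[f | MeasurableSpace.comap Z inferInstance] ω ∈ s := by
  classical
  obtain ⟨h, -, hh⟩ := (stronglyMeasurable_condExp (m := MeasurableSpace.comap Z inferInstance)
    (μ := μ) (f := f)).exists_eq_measurable_comp
  exact ⟨Finset.univ.image h, Finset.card_image_le,
    fun ω => hh ▸ Finset.mem_image_of_mem h (Finset.mem_univ _)⟩

theorem integral_iInf_norm_sub_sq_le_of_forall_mem {f g : Ω → E} (hf : MemLp f 2 μ)
    (hg : MemLp g 2 μ) {C : Finset E} (hgC : ∀ ω, g ω ∈ C) :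
    ∫ ω, ⨅ c : C, ‖f ω - c‖ ^ 2 ∂μ ≤ ∫ ω, ‖f ω - g ω‖ ^ 2 ∂μ :=
  integral_mono_of_nonneg (ae_of_all _ fun _ => Real.iInf_nonneg fun _ => sq_nonneg _)
    ((hf.sub hg).integrable_norm_pow two_ne_zero)
    (ae_of_all _ fun ω => ciInf_le (f := fun c : C => ‖f ω - c‖ ^ 2)
      ⟨0, Set.forall_mem_range.2 fun _ => sq_nonneg _⟩ ⟨_, hgC ω⟩)

end Quantization

end MeasureTheory

theorem stmt4_general {Ω : Type*} [MeasurableSpace Ω] (μ : Measure Ω) [IsProbabilityMeasure μ]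
    {n p k : ℕ} (hk : 0 < k)
    (X : Ω → EuclideanSpace ℝ (Fin n)) (Y : Ω → EuclideanSpace ℝ (Fin p))
    (hX : Measurable X) (hY2 : MemLp Y 2 μ)
    (η : Ω → EuclideanSpace ℝ (Fin p))
    (hη : η = μ[Y | MeasurableSpace.comap X inferInstance]) :
    (⨅ q : {q : EuclideanSpace ℝ (Fin n) → Fin k // Measurable q},
      ∫ ω, ‖η ω - (μ[η | MeasurableSpace.comap (fun ω => q.1 (X ω)) inferInstance]) ω‖ ^ 2 ∂μ)
    = ⨅ C : {C : Finset (EuclideanSpace ℝ (Fin p)) // C.card = k},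
        ∫ ω, ⨅ c : C.1, ‖η ω - (c : EuclideanSpace ℝ (Fin p))‖ ^ 2 ∂μ := by
  have hη2 : MemLp η 2 μ := hη ▸ hY2.condExp one_le_two
  have hηX : StronglyMeasurable[MeasurableSpace.comap X inferInstance] η :=
    hη ▸ stronglyMeasurable_condExp
  have : NeZero k := NeZero.of_pos hk
  -- For `p = 0` there may be no codebook of size `k`: the right side is then an empty infimum,
  -- which is `0`, as is every term on the left.
  rcases subsingleton_or_nontrivial (EuclideanSpace ℝ (Fin p)) with hE | hE
  · have h0 (x : EuclideanSpace ℝ (Fin p)) : ‖x‖ = 0 := by rw [Subsingleton.elim x 0, norm_zero]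
    simp [h0]
  have : Infinite (EuclideanSpace ℝ (Fin p)) := PreconnectedSpace.infinite
  have : Nonempty {q : EuclideanSpace ℝ (Fin n) → Fin k // Measurable q} :=
    ⟨⟨fun _ => 0, measurable_const⟩⟩
  obtain ⟨C₀, -, hC₀⟩ :=
    Infinite.exists_superset_card_eq (∅ : Finset (EuclideanSpace ℝ (Fin p))) k (by simp)
  have : Nonempty {C : Finset (EuclideanSpace ℝ (Fin p)) // C.card = k} := ⟨⟨C₀, hC₀⟩⟩
  apply le_antisymm
  · refine le_ciInf fun C => ?_
    let e := Fintype.equivFinOfCardEq ((Fintype.card_coe C.1).trans C.2)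
    obtain ⟨q, hq, hle⟩ :=
      exists_quantizer_integral_norm_sub_condExp_sq_le hX hηX hη2 (fun j => e.symm j)
    have hcodebook (ω : Ω) : ⨅ j, ‖η ω - e.symm j‖ ^ 2 = ⨅ c : C.1, ‖η ω - c‖ ^ 2 :=
      e.symm.iInf_comp (g := fun c : C.1 => ‖η ω - c‖ ^ 2)
    simp only [hcodebook] at hle
    exact (ciInf_le ⟨0, Set.forall_mem_range.2 fun _ => integral_nonneg fun _ => sq_nonneg _⟩
      (⟨q, hq⟩ : {q : EuclideanSpace ℝ (Fin n) → Fin k // Measurable q})).trans hle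
  · refine le_ciInf fun q => ?_
    obtain ⟨s, hs, hmem⟩ :=
      exists_finset_card_le_forall_condExp_mem (μ := μ) (fun ω => q.1 (X ω)) η
    obtain ⟨C, hsC, hC⟩ := Infinite.exists_superset_card_eq s k (hs.trans_eq (Fintype.card_fin k))
    exact (ciInf_le ⟨0, Set.forall_mem_range.2 fun _ =>
        integral_nonneg fun _ => Real.iInf_nonneg fun _ => sq_nonneg _⟩
      (⟨C, hC⟩ : {C : Finset (EuclideanSpace ℝ (Fin p)) // C.card = k})).trans
      (integral_iInf_norm_sub_sq_le_of_forall_mem hη2 (hη2.condExp one_le_two)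
        fun ω => hsC (hmem ω))

/-- Ephraim–Gray reduction: the MMSE regret, i.e. the infimum over k-ary
quantizers of `X` of `E‖η(X) - E[η(X)|q(X)]‖²` where `η(X) = E[Y|X]`, equals the
minimum expected squared distance from `η(X)` to the nearest point of a
size-`k` codebook in `ℝ^p`. -/
theorem stmt4 {Ω : Type*} [MeasurableSpace Ω] (μ : Measure Ω) [IsProbabilityMeasure μ]
    {n p k : ℕ} (hk : 0 < k)
    (X : Ω → EuclideanSpace ℝ (Fin n)) (Y : Ω → EuclideanSpace ℝ (Fin p))
    (hX : Measurable X) (hY : Measurable Y) (hY2 : MemLp Y 2 μ)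
    (η : Ω → EuclideanSpace ℝ (Fin p))
    (hη : η = μ[Y | MeasurableSpace.comap X inferInstance]) :
    (⨅ q : {q : EuclideanSpace ℝ (Fin n) → Fin k // Measurable q},
      ∫ ω, ‖η ω - (μ[η | MeasurableSpace.comap (fun ω => q.1 (X ω)) inferInstance]) ω‖ ^ 2 ∂μ)
    = ⨅ C : {C : Finset (EuclideanSpace ℝ (Fin p)) // C.card = k},
        ∫ ω, ⨅ c : C.1, ‖η ω - (c : EuclideanSpace ℝ (Fin p))‖ ^ 2 ∂μ :=
  stmt4_general μ hk X Y hX hY2 η hη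
end

section
/- Let C = {y_1,...,y_k} ⊂ [-A, A] with -A ≡ y_0 ≤ y_1 < ... < y_k ≤ y_{k+1} ≡ A, and define e_C(y) = min_{j∈[k]} (y - y_j)^2 and Δ_C = max_{0≤j≤k} (y_{j+1} - y_j). Then for all y, y' ∈ [-A, A], |e_C(y) - e_C(y')| ≤ min{2Δ_C^2, 2Δ_C·|y - y'|}. -/
open MeasureTheory

/-- Lipschitz-type smoothness of the squared-distance-to-codebook function:
for an ordered codebook `y 1 < ... < y k` in `[-A, A]` with endpoint conventions
`y 0 = -A`, `y (k+1) = A`, maximal gap `Δ` and `e t = min_j (t - y j)²`,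
one has `|e t - e t'| ≤ min (2Δ²) (2Δ|t - t'|)` on `[-A, A]`. -/
theorem stmt5 {k : ℕ} (hk : 0 < k) (A : ℝ) (hA : 0 < A)
    (y : Fin (k + 2) → ℝ) (h0 : y 0 = -A) (hlast : y (Fin.last (k + 1)) = A)
    (hmono : Monotone y)
    (hstrict : ∀ i j : Fin (k + 2), 1 ≤ (i : ℕ) → i < j → (j : ℕ) ≤ k → y i < y j)
    (Δ : ℝ) (hΔ : Δ = ⨆ j : Fin (k + 1), (y j.succ - y j.castSucc))
    (e : ℝ → ℝ) (he : ∀ t, e t = ⨅ j : Fin k, (t - y j.succ.castSucc) ^ 2) :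
    ∀ t ∈ Set.Icc (-A) A, ∀ t' ∈ Set.Icc (-A) A,
      |e t - e t'| ≤ min (2 * Δ ^ 2) (2 * Δ * |t - t'|) := by
  classical
  have hne : Nonempty (Fin k) := ⟨⟨0, hk⟩⟩
  have hbd : ∀ (g : Fin k → ℝ), BddBelow (Set.range g) :=
    fun g => (Set.finite_range g).bddBelow
  set c : Fin k → ℝ := fun j => y j.succ.castSucc with hc
  set d : ℝ → ℝ := fun t => ⨅ j, |t - c j| with hd
  have hcval : ∀ (n : ℕ) (h : n < k), c ⟨n, h⟩ = y ⟨n + 1, by omega⟩ := by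
    intro n h; rfl
  have hmin : ∀ t, ∃ j, d t = |t - c j| ∧ ∀ i, |t - c j| ≤ |t - c i| := by
    intro t
    obtain ⟨j, hj⟩ := Finite.exists_min (fun j => |t - c j|)
    exact ⟨j, le_antisymm (ciInf_le (hbd _) j) (le_ciInf hj), hj⟩
  have hdnn : ∀ t, 0 ≤ d t := fun t => le_ciInf fun j => abs_nonneg _
  have hesq : ∀ t, e t = d t ^ 2 := by
    intro t
    obtain ⟨j, hj1, hj2⟩ := hmin t
    rw [he, hj1]
    refine le_antisymm ?_ (le_ciInf fun i => ?_)
    · calc (⨅ i : Fin k, (t - c i) ^ 2) ≤ (t - c j) ^ 2 := ciInf_le (hbd _) j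
        _ = |t - c j| ^ 2 := (sq_abs _).symm
    · rw [← sq_abs (t - c i)]
      exact pow_le_pow_left₀ (abs_nonneg _) (hj2 i) 2
  have hlip : ∀ t t', d t ≤ d t' + |t - t'| := by
    intro t t'
    obtain ⟨j, hj1, _⟩ := hmin t'
    calc d t ≤ |t - c j| := ciInf_le (hbd _) j
      _ = |(t' - c j) + (t - t')| := by congr 1; ring
      _ ≤ |t' - c j| + |t - t'| := abs_add_le _ _
      _ = d t' + |t - t'| := by rw [hj1]
  have hgap : ∀ (n : ℕ) (h : n < k + 1),
      y ⟨n + 1, by omega⟩ - y ⟨n, by omega⟩ ≤ Δ := by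
    intro n h
    have := le_ciSup ((Set.finite_range fun j : Fin (k+1) =>
      (y j.succ - y j.castSucc)).bddAbove) (⟨n, h⟩ : Fin (k+1))
    rw [← hΔ] at this
    exact this
  have hmono' : ∀ (a b : ℕ) (ha : a < k + 2) (hb : b < k + 2), a ≤ b →
      y ⟨a, ha⟩ ≤ y ⟨b, hb⟩ := by
    intro a b ha hb hab
    exact hmono (by simpa [Fin.le_def] using hab)
  have hyeq : ∀ (a b : ℕ) (ha : a < k + 2) (hb : b < k + 2), a = b →
      y ⟨a, ha⟩ = y ⟨b, hb⟩ := by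
    intro a b ha hb h; subst h; rfl
  have hdΔ : ∀ t ∈ Set.Icc (-A) A, d t ≤ Δ := by
    intro t ht
    have hlast' : y ⟨k + 1, by omega⟩ = A := by
      simpa [Fin.last] using hlast
    have h0' : y ⟨0, by omega⟩ = -A := h0
    have hP : ∃ n, ∃ h : n < k + 2, t ≤ y ⟨n, h⟩ :=
      ⟨k + 1, by omega, by rw [hlast']; exact ht.2⟩
    set n := Nat.find hP with hn
    obtain ⟨hnlt, htn⟩ := Nat.find_spec hP
    have hnle : n ≤ k + 1 := Nat.find_min' hP ⟨by omega, by rw [hlast']; exact ht.2⟩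
    rcases Nat.eq_zero_or_pos n with h0n | h0n
    · -- t = -A, nearest codepoint is y 1
      have ht0 : t ≤ y ⟨0, by omega⟩ := by
        rw [hyeq 0 n (by omega) hnlt h0n.symm]; exact htn
      have ht0' : t = -A := le_antisymm (h0' ▸ ht0) ht.1
      have hy1 : y ⟨0, by omega⟩ ≤ y ⟨1, by omega⟩ :=
        hmono' 0 1 (by omega) (by omega) (by omega)
      have ht0'' : t = y ⟨0, by omega⟩ := by rw [h0', ht0']
      calc d t ≤ |t - c ⟨0, hk⟩| := ciInf_le (hbd _) _
        _ = y ⟨1, by omega⟩ - y ⟨0, by omega⟩ := by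
            have he1 : y ⟨0 + 1, by omega⟩ = y ⟨1, by omega⟩ :=
              hyeq _ _ _ _ (by omega)
            rw [hcval 0 hk, he1, abs_of_nonpos (by linarith)]
            linarith
        _ ≤ Δ := hgap 0 (by omega)
    · -- n ≥ 1 : y ⟨n-1⟩ < t ≤ y ⟨n⟩
      have hprev : ¬ ∃ h : n - 1 < k + 2, t ≤ y ⟨n - 1, h⟩ :=
        Nat.find_min hP (by omega)
      push_neg at hprev
      have hlt : y ⟨n - 1, by omega⟩ < t := hprev (by omega)
      rcases le_or_gt n k with hnk | hnk
      · -- codepoint y ⟨n⟩, at distance ≤ y⟨n⟩ - y⟨n-1⟩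
        calc d t ≤ |t - c ⟨n - 1, by omega⟩| := ciInf_le (hbd _) _
          _ ≤ y ⟨n - 1 + 1, by omega⟩ - y ⟨n - 1, by omega⟩ := by
              rw [hcval (n - 1) (by omega),
                hyeq (n - 1 + 1) n (by omega) (by omega) (by omega)]
              rw [abs_of_nonpos (by linarith)]
              have := hyeq (n - 1 + 1) n (by omega) (by omega) (by omega)
              linarith [this]
          _ ≤ Δ := hgap (n - 1) (by omega)
      · -- n = k + 1 : codepoint y ⟨k⟩, distance ≤ y⟨k+1⟩ - y⟨k⟩
        have hyk : y ⟨n - 1, by omega⟩ = y ⟨k, by omega⟩ :=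
          hyeq _ _ _ _ (by omega)
        have htk1 : t ≤ y ⟨k + 1, by omega⟩ := by rw [hlast']; exact ht.2
        rw [hyk] at hlt
        calc d t ≤ |t - c ⟨k - 1, by omega⟩| := ciInf_le (hbd _) _
          _ ≤ y ⟨k + 1, by omega⟩ - y ⟨k, by omega⟩ := by
              rw [hcval (k - 1) (by omega),
                hyeq (k - 1 + 1) k (by omega) (by omega) (by omega)]
              rw [abs_of_nonneg (by linarith)]
              linarith
          _ ≤ Δ := hgap k (by omega)
  -- final assembly
  intro t ht t' ht'
  have h1 := hdΔ t ht
  have h2 := hdΔ t' ht'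
  have hΔ0 : 0 ≤ Δ := le_trans (hdnn t) h1
  have habs : |d t - d t'| ≤ |t - t'| := by
    rw [abs_sub_le_iff]
    constructor
    · linarith [hlip t t']
    · have := hlip t' t
      rw [abs_sub_comm t' t] at this
      linarith
  have habsΔ : |d t - d t'| ≤ Δ := by
    rw [abs_sub_le_iff]
    constructor <;> [linarith [hdnn t']; linarith [hdnn t]]
  have key : |e t - e t'| = |d t - d t'| * (d t + d t') := by
    rw [hesq, hesq, ← abs_of_nonneg (add_nonneg (hdnn t) (hdnn t')), ← abs_mul]
    congr 1; ring
  rw [key]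
  refine le_min ?_ ?_
  · calc |d t - d t'| * (d t + d t') ≤ Δ * (2 * Δ) :=
        mul_le_mul habsΔ (by linarith) (add_nonneg (hdnn t) (hdnn t')) hΔ0
      _ = 2 * Δ ^ 2 := by ring
  · calc |d t - d t'| * (d t + d t') ≤ |t - t'| * (2 * Δ) :=
        mul_le_mul habs (by linarith) (add_nonneg (hdnn t) (hdnn t')) (abs_nonneg _)
      _ = 2 * Δ * |t - t'| := by ring
end

section
/- Let C ⊂ [-A,A] be a finite codebook with gap Δ_C, e_C(y) = min over c in C of (y-c)^2, and let Y be a real random variable and η(X) another real random variable, both supported in [-A,A]. Then |E[e_C(η(X))] - E[e_C(Y)]| ≤ 2Δ_C^2 · E[min{1, (1/Δ_C)·E[|η(X) - Y| | Y]}]. -/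
/-!
Write `e = d²` with `d = infDist · C` the distance to the codebook. Every point of
`[-A, A]` lies in a cell `[y i, y (i+1)]` of the grid, one of whose endpoints is a
codepoint, so `d ≤ Δ` there. As `d` is `1`-Lipschitz,
`|d s² - d t²| = (d s + d t) |d s - d t| ≤ 2Δ min(Δ, |s - t|)`. Integrating this gives
the bound with `|η(X) - Y|` in place of its conditional expectation given `Y`, and the
conditional Jensen inequality for the concave map `x ↦ min(1, x / Δ)` passes to the latter.
-/

open MeasureTheory Metric Set

theorem exists_mem_Icc_castSucc_succ {α : Type*} [LinearOrder α] {n : ℕ}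
    (y : Fin (n + 2) → α) {t : α} (ht : t ∈ Icc (y 0) (y (Fin.last _))) :
    ∃ i : Fin (n + 1), t ∈ Icc (y i.castSucc) (y i.succ) := by
  induction n with
  | zero => exact ⟨0, ht⟩
  | succ n ih =>
    by_cases h1 : t ≤ y 1
    · exact ⟨0, ht.1, h1⟩
    · obtain ⟨i, hi⟩ := ih (fun i => y i.succ) ⟨(not_le.1 h1).le, ht.2⟩
      exact ⟨i.succ, hi⟩

theorem ciInf_sq_sub_eq_infDist_sq {ι : Type*} [Finite ι] [Nonempty ι] (c : ι → ℝ)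
    (t : ℝ) : ⨅ j, (t - c j) ^ 2 = infDist t (range c) ^ 2 := by
  obtain ⟨-, ⟨j, rfl⟩, hj⟩ :=
    (finite_range c).isCompact.exists_infDist_eq_dist (range_nonempty c) t
  refine le_antisymm ((ciInf_le (finite_range _).bddBelow j).trans_eq ?_)
    (le_ciInf fun i => ?_)
  · rw [hj, Real.dist_eq, sq_abs]
  · rw [← sq_abs (t - c i), ← Real.dist_eq]
    gcongr
    · exact infDist_nonneg
    · exact infDist_le_dist_of_mem (mem_range_self i)

theorem abs_sq_sub_sq_le_of_mem_Icc {a b r Δ : ℝ} (hΔ : 0 < Δ) (ha : a ∈ Icc 0 Δ)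
    (hb : b ∈ Icc 0 Δ) (hab : |a - b| ≤ r) :
    |a ^ 2 - b ^ 2| ≤ 2 * Δ ^ 2 * min 1 (1 / Δ * r) :=
  calc |a ^ 2 - b ^ 2| = |a + b| * |a - b| := by rw [← abs_mul]; ring_nf
    _ ≤ (2 * Δ) * min Δ r := by
      gcongr
      · rw [abs_of_nonneg (by linarith [ha.1, hb.1])]; linarith [ha.2, hb.2]
      · refine le_min (abs_sub_le_iff.2 ⟨?_, ?_⟩) hab <;>
          linarith [ha.1, ha.2, hb.1, hb.2]
    _ = 2 * Δ ^ 2 * min 1 (1 / Δ * r) := by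
      rw [mul_min_of_nonneg _ _ (by positivity), mul_min_of_nonneg _ _ (by positivity)]
      field_simp

theorem abs_infDist_sq_sub_infDist_sq_le {α : Type*} [PseudoMetricSpace α] {S : Set α}
    {Δ : ℝ} (hΔ : 0 < Δ) {t s : α} (ht : infDist t S ≤ Δ) (hs : infDist s S ≤ Δ) :
    |infDist t S ^ 2 - infDist s S ^ 2| ≤ 2 * Δ ^ 2 * min 1 (1 / Δ * dist t s) :=
  abs_sq_sub_sq_le_of_mem_Icc hΔ ⟨infDist_nonneg, ht⟩ ⟨infDist_nonneg, hs⟩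
    (by simpa [Real.dist_eq] using (lipschitz_infDist_pt S).dist_le_mul t s)

theorem infDist_range_le_of_forall_sub_le {k : ℕ} (hk : 0 < k) (y : Fin (k + 2) → ℝ)
    {Δ t : ℝ} (hgap : ∀ i : Fin (k + 1), y i.succ - y i.castSucc ≤ Δ)
    (ht : t ∈ Icc (y 0) (y (Fin.last _))) :
    infDist t (range fun j : Fin k => y j.succ.castSucc) ≤ Δ := by
  set c : Fin k → ℝ := fun j => y j.succ.castSucc
  obtain ⟨i, hi⟩ := exists_mem_Icc_castSucc_succ y ht
  cases i using Fin.cases with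
  | zero =>
    have hc : c ⟨0, hk⟩ = y (0 : Fin (k + 1)).succ := congrArg y (Fin.ext (by simp))
    calc _ ≤ dist t (c ⟨0, hk⟩) := infDist_le_dist_of_mem (mem_range_self _)
      _ ≤ Δ := by
        rw [hc, Real.dist_eq, abs_of_nonpos (by linarith [hi.2])]
        linarith [hgap 0, hi.1]
  | succ j =>
    calc _ ≤ dist t (c j) := infDist_le_dist_of_mem (mem_range_self _)
      _ ≤ Δ := by
        rw [Real.dist_eq, abs_of_nonneg (by linarith [hi.1])]
        linarith [hgap j.succ, hi.2]

theorem pos_of_forall_succ_sub_castSucc_le {n : ℕ} {y : Fin (n + 1) → ℝ} {Δ : ℝ}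
    (hgap : ∀ i : Fin n, y i.succ - y i.castSucc ≤ Δ) (hy : y 0 < y (Fin.last n)) :
    0 < Δ := by
  by_contra! hΔ
  have hanti : Antitone y := Fin.antitone_iff_succ_le.2 fun i => by linarith [hgap i]
  have := hanti (Fin.zero_le (Fin.last n))
  linarith

theorem MeasureTheory.abs_integral_sub_integral_le {Ω : Type*} {mΩ : MeasurableSpace Ω}
    {μ : Measure Ω} {f g h : Ω → ℝ} (hf : Integrable f μ) (hg : Integrable g μ)
    (hh : Integrable h μ) (hfg : ∀ᵐ ω ∂μ, |f ω - g ω| ≤ h ω) :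
    |∫ ω, f ω ∂μ - ∫ ω, g ω ∂μ| ≤ ∫ ω, h ω ∂μ := by
  rw [← integral_sub hf hg]
  exact abs_integral_le_integral_abs.trans (integral_mono_ae (hf.sub hg).abs hh hfg)

theorem MeasureTheory.Integrable.const_min_const_mul {Ω : Type*} {mΩ : MeasurableSpace Ω}
    {μ : Measure Ω} [IsFiniteMeasure μ] {f : Ω → ℝ} (hf : Integrable f μ) (a c : ℝ) :
    Integrable (fun ω => min a (c * f ω)) μ :=
  (integrable_const a).inf (hf.const_mul c)

theorem integral_min_le_integral_min_condExp {Ω : Type*} {m mΩ : MeasurableSpace Ω}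
    {μ : Measure Ω} [IsFiniteMeasure μ] (hm : m ≤ mΩ) (a c : ℝ) {Z : Ω → ℝ}
    (hZ : Integrable Z μ) :
    ∫ ω, min a (c * Z ω) ∂μ ≤ ∫ ω, min a (c * μ[Z|m] ω) ∂μ := by
  set φ : ℝ → ℝ := fun x => min a (c * x)
  have hφ : ConcaveOn ℝ univ φ :=
    (concaveOn_const a convex_univ).inf ((LinearMap.mul ℝ ℝ c).concaveOn convex_univ)
  have hφ_cont : Continuous φ := by fun_prop
  calc ∫ ω, φ (Z ω) ∂μ = ∫ ω, μ[φ ∘ Z|m] ω ∂μ := (integral_condExp hm).symm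
    _ ≤ ∫ ω, φ (μ[Z|m] ω) ∂μ :=
      integral_mono_ae integrable_condExp (integrable_condExp.const_min_const_mul a c)
        (hφ.condExp_map_le_univ hm hφ_cont.upperSemicontinuous hZ (hZ.const_min_const_mul a c))

theorem stmt6_general {Ω : Type*} [MeasurableSpace Ω] (μ : Measure Ω) [IsProbabilityMeasure μ]
    {k : ℕ} (hk : 0 < k) (A : ℝ) (hA : 0 < A)
    (y : Fin (k + 2) → ℝ) (h0 : y 0 = -A) (hlast : y (Fin.last (k + 1)) = A)
    (Δ : ℝ) (hΔ : Δ = ⨆ j : Fin (k + 1), (y j.succ - y j.castSucc))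
    (e : ℝ → ℝ) (he : ∀ t, e t = ⨅ j : Fin k, (t - y j.succ.castSucc) ^ 2)
    (Y ηX : Ω → ℝ) (hY : Measurable Y) (hηX : Measurable ηX)
    (hYsupp : ∀ᵐ ω ∂μ, Y ω ∈ Set.Icc (-A) A)
    (hηsupp : ∀ᵐ ω ∂μ, ηX ω ∈ Set.Icc (-A) A) :
    |(∫ ω, e (ηX ω) ∂μ) - ∫ ω, e (Y ω) ∂μ|
      ≤ 2 * Δ ^ 2 * ∫ ω, min 1
          ((1 / Δ) * (μ[fun ω' => |ηX ω' - Y ω'| |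
              MeasurableSpace.comap Y inferInstance]) ω) ∂μ := by
  have : Nonempty (Fin k) := ⟨⟨0, hk⟩⟩
  set S := range fun j : Fin k => y j.succ.castSucc
  have hgap : ∀ i : Fin (k + 1), y i.succ - y i.castSucc ≤ Δ := fun i => hΔ ▸
    le_ciSup (f := fun j : Fin (k + 1) => y j.succ - y j.castSucc) (finite_range _).bddAbove i
  have hΔpos : 0 < Δ := pos_of_forall_succ_sub_castSucc_le hgap (by linarith)
  have hdist : ∀ t ∈ Icc (-A) A, infDist t S ≤ Δ := fun t ht =>
    infDist_range_le_of_forall_sub_le hk y hgap (h0 ▸ hlast ▸ ht)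
  obtain rfl : e = fun t => infDist t S ^ 2 :=
    funext fun t => (he t).trans (ciInf_sq_sub_eq_infDist_sq _ t)
  have hint : ∀ X : Ω → ℝ, Measurable X → (∀ᵐ ω ∂μ, X ω ∈ Icc (-A) A) →
      Integrable (fun ω => infDist (X ω) S ^ 2) μ := fun X hX hXA =>
    Integrable.of_mem_Icc 0 (Δ ^ 2) (by fun_prop) <| hXA.mono fun ω hω =>
      ⟨sq_nonneg _, pow_le_pow_left₀ infDist_nonneg (hdist _ hω) 2⟩
  have hdiff : Integrable (fun ω => |ηX ω - Y ω|) μ :=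
    ((Integrable.of_mem_Icc _ _ hηX.aemeasurable hηsupp).sub
      (Integrable.of_mem_Icc _ _ hY.aemeasurable hYsupp)).abs
  calc _ ≤ ∫ ω, 2 * Δ ^ 2 * min 1 (1 / Δ * |ηX ω - Y ω|) ∂μ :=
        abs_integral_sub_integral_le (hint ηX hηX hηsupp) (hint Y hY hYsupp)
          ((hdiff.const_min_const_mul 1 (1 / Δ)).const_mul _)
          (by filter_upwards [hηsupp, hYsupp] with ω hηω hYω
              exact abs_infDist_sq_sub_infDist_sq_le hΔpos (hdist _ hηω) (hdist _ hYω))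
    _ = 2 * Δ ^ 2 * ∫ ω, min 1 (1 / Δ * |ηX ω - Y ω|) ∂μ := integral_const_mul _ _
    _ ≤ _ := mul_le_mul_of_nonneg_left
        (integral_min_le_integral_min_condExp hY.comap_le 1 (1 / Δ) hdiff) (by positivity)

/-- Comparison of the expected quantization errors of `η(X)` and `Y`:
`|E[e_C(η(X))] - E[e_C(Y)]| ≤ 2Δ_C² E[min{1, (1/Δ_C) E[|η(X) - Y| | Y]}]`,
where `e_C` is the squared distance to the codebook and `Δ_C` the maximal gap. -/
theorem stmt6 {Ω : Type*} [MeasurableSpace Ω] (μ : Measure Ω) [IsProbabilityMeasure μ]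
    {k : ℕ} (hk : 0 < k) (A : ℝ) (hA : 0 < A)
    (y : Fin (k + 2) → ℝ) (h0 : y 0 = -A) (hlast : y (Fin.last (k + 1)) = A)
    (hmono : Monotone y)
    (Δ : ℝ) (hΔ : Δ = ⨆ j : Fin (k + 1), (y j.succ - y j.castSucc))
    (e : ℝ → ℝ) (he : ∀ t, e t = ⨅ j : Fin k, (t - y j.succ.castSucc) ^ 2)
    (Y ηX : Ω → ℝ) (hY : Measurable Y) (hηX : Measurable ηX)
    (hYsupp : ∀ᵐ ω ∂μ, Y ω ∈ Set.Icc (-A) A)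
    (hηsupp : ∀ᵐ ω ∂μ, ηX ω ∈ Set.Icc (-A) A) :
    |(∫ ω, e (ηX ω) ∂μ) - ∫ ω, e (Y ω) ∂μ|
      ≤ 2 * Δ ^ 2 * ∫ ω, min 1
          ((1 / Δ) * (μ[fun ω' => |ηX ω' - Y ω'| |
              MeasurableSpace.comap Y inferInstance]) ω) ∂μ :=
  stmt6_general μ hk A hA y h0 hlast Δ hΔ e he Y ηX hY hηX hYsupp hηsupp
end

section
/- Suppose Z is a random vector in R^p with E||Z||^4 < ∞ and W = ||Z|| satisfies P[W > E W + t] ≤ exp(-t²/(2v)) for all t > 0. Then for every r > E||Z|| and k ≥ 1, there exists a (k+1)-ary quantizer q of Z such that E||Z - E[Z|q(Z)]||^2 ≤ 4(3r k^{-1/p})^2 + 4·sqrt(E||Z||^4)·exp(-(r - E||Z||)²/(4v)). -/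
/-!
Cover the ball of radius `r` by `k` closed balls of radius `ε = 3 r k^(-1/p)`: a maximal
`ε`-separated subset of the ball is such a cover, and comparing the volume of the disjoint balls of
radius `ε / 2` around its points with that of the ball of radius `r + ε / 2` bounds its size by
`((ε + 2r) / ε)^p ≤ k`. Quantize a point to the first ball containing it and everything else to an
overflow cell. Conditioning on a finite partition replaces `Z` by its cell averages. On an ordinary
cell `Z` and its average lie in one ball of radius `ε`, so the error is at most `(2ε)²`. On the
overflow cell `S`, Jensen gives `E[1_S ‖Z - E[Z | S]‖²] ≤ 4 E[1_S ‖Z‖²] ≤ 4 √(P S) √(E‖Z‖⁴)`, and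
`S ⊆ {‖Z‖ > r}` has probability at most `exp(-(r - E‖Z‖)² / (2v))` by the tail bound with
`t = r - E‖Z‖`.
-/

open MeasureTheory Metric Set
open scoped ENNReal NNReal

section Covering

variable {E : Type*} [NormedAddCommGroup E] [NormedSpace ℝ E] [FiniteDimensional ℝ E]

theorem Finset.card_le_of_isSeparated_of_subset_closedBall [MeasurableSpace E] [BorelSpace E]
    {s : Finset E} {x : E} {r : ℝ} {ε : ℝ≥0} (hr : 0 ≤ r) (hε : 0 < ε)
    (hs : (s : Set E) ⊆ closedBall x r) (hsep : IsSeparated ε (s : Set E)) :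
    (s.card : ℝ) ≤ ((ε + 2 * r) / ε) ^ Module.finrank ℝ E := by
  let μ : Measure E := Measure.addHaar
  set d := Module.finrank ℝ E
  have hε' : (0 : ℝ) < ε := hε
  have hdisj : (s : Set E).PairwiseDisjoint fun c => ball c (ε / 2) := by
    intro c hc c' hc' hne
    refine ball_disjoint_ball ?_
    have : (ε : ℝ≥0∞) < edist c c' := hsep hc hc' hne
    rw [edist_nndist, ENNReal.coe_lt_coe, ← NNReal.coe_lt_coe, coe_nndist] at this
    linarith
  have hsub : (⋃ c ∈ s, ball c (ε / 2)) ⊆ ball x (r + ε / 2) :=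
    iUnion₂_subset fun c hc => ball_subset_ball' (by linarith [mem_closedBall.1 (hs hc)])
  have hvol : (s.card : ℝ≥0∞) * ENNReal.ofReal ((ε / 2 : ℝ) ^ d) * μ (ball 0 1)
      ≤ ENNReal.ofReal ((r + ε / 2) ^ d) * μ (ball 0 1) :=
    calc (s.card : ℝ≥0∞) * ENNReal.ofReal ((ε / 2 : ℝ) ^ d) * μ (ball 0 1)
        = μ (⋃ c ∈ s, ball c (ε / 2)) := by
          rw [measure_biUnion_finset hdisj fun c _ => measurableSet_ball]
          simp [μ.addHaar_ball_of_pos _ (half_pos hε'), d, mul_assoc]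
      _ ≤ μ (ball x (r + ε / 2)) := measure_mono hsub
      _ = ENNReal.ofReal ((r + ε / 2) ^ d) * μ (ball 0 1) :=
          μ.addHaar_ball_of_pos _ (by positivity)
  have hvol' := (ENNReal.mul_le_mul_iff_left (measure_ball_pos μ 0 zero_lt_one).ne'
    measure_ball_lt_top.ne).1 hvol
  rw [← ENNReal.ofReal_natCast, ← ENNReal.ofReal_mul (by positivity),
    ENNReal.ofReal_le_ofReal_iff (by positivity)] at hvol'
  rw [show (ε + 2 * r) / ε = (r + ε / 2) / (ε / 2) by field_simp; ring, div_pow,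
    le_div_iff₀ (by positivity)]
  exact hvol'

theorem packingNumber_closedBall_le [MeasurableSpace E] [BorelSpace E] {x : E} {r : ℝ}
    {ε : ℝ≥0} {N : ℕ} (hr : 0 ≤ r) (hε : 0 < ε)
    (hN : ((ε + 2 * r) / ε) ^ Module.finrank ℝ E ≤ N) :
    packingNumber ε (closedBall x r) ≤ N := by
  refine iSup₂_le fun C hC => iSup_le fun hsep => ?_
  by_contra! hlt
  obtain ⟨t, htC, htcard⟩ := exists_subset_encard_eq (Order.add_one_le_of_lt hlt)
  have htfin : t.Finite := finite_of_encard_eq_coe htcard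
  have hcard := htfin.toFinset.card_le_of_isSeparated_of_subset_closedBall hr hε
    (by simpa using htC.trans hC) (by simpa using hsep.subset htC)
  have htcard' : htfin.toFinset.card = N + 1 := by
    exact_mod_cast htfin.encard_eq_coe_toFinset_card.symm.trans htcard
  rw [htcard'] at hcard
  push_cast at hcard
  linarith

theorem Set.exists_fin_subset_range {α : Type*} [Nonempty α] {s : Set α} {k : ℕ}
    (hs : s.encard ≤ k) : ∃ f : Fin k → α, s ⊆ range f := by
  classical
  obtain ⟨n, f, hf, rfl⟩ := (finite_of_encard_le_coe hs).fin_param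
  have hnk : n ≤ k := by simpa using hf.encard_range.trans hs
  refine ⟨fun i => if h : (i : ℕ) < n then f ⟨i, h⟩ else Classical.arbitrary α, ?_⟩
  rintro _ ⟨j, rfl⟩
  exact ⟨Fin.castLE hnk j, by simp⟩

theorem exists_fin_cover_closedBall_of_pow_le [MeasurableSpace E] [BorelSpace E] (x : E)
    {r ε : ℝ} {k : ℕ} (hr : 0 ≤ r) (hε : 0 < ε)
    (hk : ((ε + 2 * r) / ε) ^ Module.finrank ℝ E ≤ k) :
    ∃ c : Fin k → E, closedBall x r ⊆ ⋃ i, closedBall (c i) ε := by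
  lift ε to ℝ≥0 using hε.le
  have hpack := packingNumber_closedBall_le (x := x) hr (mod_cast hε) hk
  have hfin : packingNumber ε (closedBall x r) ≠ ⊤ := ne_top_of_le_ne_top (by simp) hpack
  obtain ⟨c, hc⟩ := exists_fin_subset_range ((encard_maximalSeparatedSet hfin).trans_le hpack)
  refine ⟨c, (isCover_iff_subset_iUnion_closedBall.1 (isCover_maximalSeparatedSet hfin)).trans ?_⟩
  refine iUnion₂_subset fun y hy => ?_
  obtain ⟨i, rfl⟩ := hc hy
  exact subset_iUnion_of_subset i subset_rfl

theorem exists_fin_cover_closedBall [MeasurableSpace E] [BorelSpace E] (x : E) {r : ℝ}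
    {k : ℕ} (hr : 0 ≤ r) (hk : 0 < k) :
    ∃ c : Fin k → E, closedBall x r ⊆
      ⋃ i, closedBall (c i) (3 * r * (k : ℝ) ^ (-(1 : ℝ) / Module.finrank ℝ E)) := by
  set d := Module.finrank ℝ E
  set ε := 3 * r * (k : ℝ) ^ (-(1 : ℝ) / d)
  rcases le_or_gt r ε with hrε | hεr
  · exact ⟨fun _ => x, fun z hz => mem_iUnion.2 ⟨⟨0, hk⟩, closedBall_subset_closedBall hrε hz⟩⟩
  have hd : d ≠ 0 := by
    rintro hd
    simp only [ε, hd, CharP.cast_eq_zero, div_zero, Real.rpow_zero] at hεr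
    linarith
  have hr0 : 0 < r := hr.lt_of_ne (by rintro rfl; simp [ε] at hεr)
  have hε : 0 < ε := by positivity
  refine exists_fin_cover_closedBall_of_pow_le x hr hε ?_
  have h3r : 3 * r / ε = ((k : ℝ) ^ (-(1 : ℝ) / d))⁻¹ := by
    have : (k : ℝ) ^ (-(1 : ℝ) / d) ≠ 0 := by positivity
    rw [div_eq_iff hε.ne', inv_mul_eq_div, eq_div_iff this]
  calc ((ε + 2 * r) / ε) ^ d ≤ (3 * r / ε) ^ d := by gcongr; linarith
    _ = k := by
      rw [h3r, ← Real.rpow_neg (Nat.cast_nonneg k), neg_div, neg_neg, one_div,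
        Real.rpow_inv_natCast_pow (Nat.cast_nonneg k) hd]

end Covering

section Quantizer

variable {E : Type*} [PseudoMetricSpace E] {k : ℕ}

-- The first center within distance `ε` of `z`, or the overflow cell `Fin.last k` if there is
-- none; phrased through `Nat.find` so that `measurable_find` applies.
open Classical in
noncomputable def coverQuantizer (c : Fin k → E) (ε : ℝ) (z : E) : Fin (k + 1) :=
  Fin.ofNat (k + 1) <|
    Nat.find (⟨k, Or.inl rfl⟩ : ∃ n, n = k ∨ ∃ i : Fin k, (i : ℕ) = n ∧ dist z (c i) ≤ ε)

theorem measurable_coverQuantizer [MeasurableSpace E] [OpensMeasurableSpace E]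
    (c : Fin k → E) (ε : ℝ) : Measurable (coverQuantizer c ε) := by
  classical
  refine measurable_from_nat.comp (measurable_find
    (p := fun z n => n = k ∨ ∃ i : Fin k, (i : ℕ) = n ∧ dist z (c i) ≤ ε) _ fun n => ?_)
  simp only [ofPred_or, ofPred_exists, ofPred_and]
  exact (MeasurableSet.const _).union <| MeasurableSet.iUnion fun i =>
    (MeasurableSet.const _).inter measurableSet_closedBall

theorem coverQuantizer_spec (c : Fin k → E) (ε : ℝ) (z : E) :
    ((coverQuantizer c ε z : ℕ) = k ∨
      ∃ i : Fin k, (i : ℕ) = coverQuantizer c ε z ∧ dist z (c i) ≤ ε) ∧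
    ∀ i : Fin k, dist z (c i) ≤ ε → (coverQuantizer c ε z : ℕ) ≤ i := by
  classical
  have hex : ∃ n, n = k ∨ ∃ i : Fin k, (i : ℕ) = n ∧ dist z (c i) ≤ ε := ⟨k, Or.inl rfl⟩
  have hval : (coverQuantizer c ε z : ℕ) = Nat.find hex :=
    Nat.mod_eq_of_lt (Nat.lt_succ_of_le (Nat.find_min' hex (Or.inl rfl)))
  rw [hval]
  exact ⟨Nat.find_spec hex, fun i hi => Nat.find_min' hex (Or.inr ⟨i, rfl, hi⟩)⟩

theorem coverQuantizer_preimage_subset_closedBall (c : Fin k → E) (ε : ℝ) {i : Fin (k + 1)}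
    (hi : i ≠ Fin.last k) : coverQuantizer c ε ⁻¹' {i} ⊆ closedBall (c (i.castPred hi)) ε := by
  intro z hz
  obtain ⟨hlast | ⟨j, hj, hdist⟩, -⟩ := coverQuantizer_spec c ε z
  · exact absurd (hz.symm.trans (Fin.ext hlast)) hi
  · rwa [show i.castPred hi = j from Fin.ext (hj.trans (congrArg Fin.val hz)).symm]

theorem lt_dist_of_coverQuantizer_eq_last (c : Fin k → E) {ε : ℝ} {z : E}
    (hz : coverQuantizer c ε z = Fin.last k) (i : Fin k) : ε < dist z (c i) := by
  by_contra! hi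
  have := (coverQuantizer_spec c ε z).2 i hi
  rw [hz, Fin.val_last] at this
  exact i.is_lt.not_ge this

end Quantizer

section SetAverage

variable {Ω E : Type*} [MeasurableSpace Ω] {μ : Measure Ω} [NormedAddCommGroup E]
  [NormedSpace ℝ E] [CompleteSpace E] {f : Ω → E} {s : Set Ω}

theorem sq_norm_setAverage_le (hs : μ s ≠ ∞) (hf : IntegrableOn f s μ)
    (hf2 : IntegrableOn (fun x => ‖f x‖ ^ 2) s μ) :
    ‖⨍ x in s, f x ∂μ‖ ^ 2 ≤ ⨍ x in s, ‖f x‖ ^ 2 ∂μ := by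
  rcases eq_or_ne (μ s) 0 with h0 | h0
  · simp [setAverage_eq, measureReal_def, h0]
  exact (convexOn_univ_norm.pow (fun _ _ => norm_nonneg _) 2).map_set_average_le
    (continuous_norm.pow 2).continuousOn isClosed_univ h0 hs (ae_of_all _ fun _ => mem_univ _)
    hf hf2

theorem norm_setIntegral_sq_le (hs : μ s ≠ ∞) (hf : IntegrableOn f s μ)
    (hf2 : IntegrableOn (fun x => ‖f x‖ ^ 2) s μ) :
    ‖∫ x in s, f x ∂μ‖ ^ 2 ≤ μ.real s * ∫ x in s, ‖f x‖ ^ 2 ∂μ := by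
  rw [← measure_smul_setAverage f hs, ← measure_smul_setAverage _ hs, norm_smul, smul_eq_mul,
    Real.norm_of_nonneg measureReal_nonneg]
  have ha : 0 ≤ μ.real s := measureReal_nonneg
  nlinarith [mul_le_mul_of_nonneg_left (sq_norm_setAverage_le hs hf hf2) (mul_nonneg ha ha)]

theorem norm_sub_setAverage_le_of_mapsTo {x : E} {ε : ℝ} (hs : MeasurableSet s) (h0 : μ s ≠ 0)
    (hs' : μ s ≠ ∞) (hf : IntegrableOn f s μ) (hfs : MapsTo f s (closedBall x ε)) {y : Ω}
    (hy : y ∈ s) : ‖f y - ⨍ z in s, f z ∂μ‖ ≤ 2 * ε := by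
  have havg := (convex_closedBall x ε).set_average_mem isClosed_closedBall h0 hs'
    (ae_restrict_of_forall_mem hs hfs) hf
  rw [← dist_eq_norm]
  linarith [dist_triangle_right (f y) (⨍ z in s, f z ∂μ) x, mem_closedBall.1 (hfs hy),
    mem_closedBall.1 havg]

theorem setIntegral_norm_sub_setAverage_sq_le (hs : μ s ≠ ∞) (hf : IntegrableOn f s μ)
    (hf2 : IntegrableOn (fun x => ‖f x‖ ^ 2) s μ) :
    ∫ x in s, ‖f x - ⨍ y in s, f y ∂μ‖ ^ 2 ∂μ ≤ 4 * ∫ x in s, ‖f x‖ ^ 2 ∂μ := by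
  set u := ⨍ y in s, f y ∂μ
  have hpt : ∀ x, ‖f x - u‖ ^ 2 ≤ 2 * ‖f x‖ ^ 2 + 2 * ‖u‖ ^ 2 := fun x => by
    nlinarith [norm_sub_le (f x) u, norm_nonneg (f x - u), sq_nonneg (‖f x‖ - ‖u‖)]
  have hu : μ.real s * ‖u‖ ^ 2 ≤ ∫ x in s, ‖f x‖ ^ 2 ∂μ := by
    rw [← measure_smul_setAverage _ hs, smul_eq_mul]
    exact mul_le_mul_of_nonneg_left (sq_norm_setAverage_le hs hf hf2) measureReal_nonneg
  calc ∫ x in s, ‖f x - u‖ ^ 2 ∂μ ≤ ∫ x in s, (2 * ‖f x‖ ^ 2 + 2 * ‖u‖ ^ 2) ∂μ :=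
        integral_mono_of_nonneg (ae_of_all _ fun _ => by positivity)
          ((hf2.const_mul 2).add (integrableOn_const hs)) (ae_of_all _ hpt)
    _ = 2 * ∫ x in s, ‖f x‖ ^ 2 ∂μ + 2 * (μ.real s * ‖u‖ ^ 2) := by
        rw [integral_add (hf2.const_mul 2) (integrableOn_const hs), integral_const_mul,
          setIntegral_const, smul_eq_mul]
        ring
    _ ≤ 4 * ∫ x in s, ‖f x‖ ^ 2 ∂μ := by linarith

end SetAverage

section CondExpFinite

variable {Ω E ι : Type*} [MeasurableSpace Ω] {μ : Measure Ω} [MeasurableSpace ι]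
  [MeasurableSingletonClass ι] {Y : Ω → ι}

theorem ae_measure_preimage_singleton_ne_zero [Countable ι] (hY : Measurable Y) :
    ∀ᵐ ω ∂μ, μ (Y ⁻¹' {Y ω}) ≠ 0 := by
  have : ∀ᵐ i ∂μ.map Y, μ.map Y {i} ≠ 0 := ae_iff_of_countable.2 fun _ h => h
  filter_upwards [ae_of_ae_map hY.aemeasurable this] with ω hω
  rwa [Measure.map_apply hY (measurableSet_singleton _)] at hω

theorem condExp_comap_ae_eq_setAverage [Finite ι] [IsFiniteMeasure μ] [NormedAddCommGroup E]
    [NormedSpace ℝ E] [CompleteSpace E] (hY : Measurable Y) {f : Ω → E} (hf : Integrable f μ) :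
    μ[f | MeasurableSpace.comap Y inferInstance] =ᵐ[μ] fun ω => ⨍ x in Y ⁻¹' {Y ω}, f x ∂μ := by
  classical
  have := Fintype.ofFinite ι
  set avg : ι → E := fun i => ⨍ x in Y ⁻¹' {i}, f x ∂μ
  have hm := hY.comap_le
  have hGm : StronglyMeasurable[MeasurableSpace.comap Y inferInstance] (avg ∘ Y) :=
    StronglyMeasurable.of_discrete.comp_measurable (comap_measurable Y)
  have hGint : Integrable (avg ∘ Y) μ := by
    obtain ⟨C, hC⟩ := Finite.exists_le fun i => ‖avg i‖
    exact .of_bound (hGm.mono hm).aestronglyMeasurable C (ae_of_all _ fun ω => hC (Y ω))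
  have hcell (i : ι) : ∫ x in Y ⁻¹' {i}, avg (Y x) ∂μ = ∫ x in Y ⁻¹' {i}, f x ∂μ := by
    rw [setIntegral_congr_fun (hY (measurableSet_singleton i)) fun x hx => congrArg avg hx,
      setIntegral_setAverage]
  refine (ae_eq_condExp_of_forall_setIntegral_eq hm hf (fun _ _ _ => hGint.integrableOn) ?_
    hGm.aestronglyMeasurable).symm
  rintro _ ⟨t, -, rfl⟩ -
  have ht : Y ⁻¹' t = ⋃ i ∈ t.toFinset, Y ⁻¹' {i} := by simp
  have hdisj := (pairwiseDisjoint_fiber Y (t.toFinset : Set ι))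
  rw [ht, integral_biUnion_finset _ (fun i _ => hY (measurableSet_singleton i)) hdisj
      fun _ _ => hGint.integrableOn,
    integral_biUnion_finset _ (fun i _ => hY (measurableSet_singleton i)) hdisj
      fun _ _ => hf.integrableOn]
  exact Finset.sum_congr rfl fun i _ => hcell i

end CondExpFinite

section QuantizationError

variable {Ω E : Type*} [MeasurableSpace Ω] {μ : Measure Ω} [NormedAddCommGroup E]

theorem setIntegral_norm_sq_le_sqrt_mul_sqrt [IsFiniteMeasure μ] {f : Ω → E} (hf : MemLp f 4 μ)
    (s : Set Ω) :
    ∫ x in s, ‖f x‖ ^ 2 ∂μ ≤ √(μ.real s) * √(∫ x, ‖f x‖ ^ 4 ∂μ) := by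
  have hf2 : Integrable (fun x => ‖f x‖ ^ 2) μ :=
    (hf.mono_exponent (by norm_num)).integrable_norm_pow two_ne_zero
  have hf4 : Integrable (fun x => ‖f x‖ ^ 4) μ := hf.integrable_norm_pow four_ne_zero
  have hnorm (x : Ω) : ‖‖f x‖ ^ 2‖ ^ 2 = ‖f x‖ ^ 4 := by
    rw [norm_pow, norm_norm, ← pow_mul]
  have hcs := norm_setIntegral_sq_le (measure_ne_top μ s) hf2.integrableOn
    (by simpa only [hnorm] using hf4.integrableOn)
  simp only [hnorm] at hcs
  rw [← Real.sqrt_mul measureReal_nonneg]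
  refine (le_abs_self _).trans (Real.abs_le_sqrt ?_)
  rw [← sq_abs, ← Real.norm_eq_abs]
  exact hcs.trans (mul_le_mul_of_nonneg_left
    (setIntegral_le_integral hf4 (ae_of_all _ fun _ => by positivity)) measureReal_nonneg)

variable [NormedSpace ℝ E] [CompleteSpace E] [MeasurableSpace E]
  {ι : Type*} [Finite ι] [MeasurableSpace ι] [MeasurableSingletonClass ι]

theorem integral_norm_sub_condExp_sq_le [IsProbabilityMeasure μ] {Z : Ω → E} (hZ : Measurable Z)
    (hZ4 : MemLp Z 4 μ) {q : E → ι} (hq : Measurable q) {o : ι} {ε : ℝ}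
    (hcell : ∀ i ≠ o, ∃ x, q ⁻¹' {i} ⊆ closedBall x ε) :
    ∫ ω, ‖Z ω - μ[Z | MeasurableSpace.comap (fun ω => q (Z ω)) inferInstance] ω‖ ^ 2 ∂μ
      ≤ 4 * ε ^ 2 + 4 * √(μ.real {ω | q (Z ω) = o}) * √(∫ ω, ‖Z ω‖ ^ 4 ∂μ) := by
  set Y := fun ω => q (Z ω)
  have hY : Measurable Y := hq.comp hZ
  set S := Y ⁻¹' {o}
  have hS : MeasurableSet S := hY (measurableSet_singleton o)
  have hZ2 : MemLp Z 2 μ := hZ4.mono_exponent (by norm_num)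
  have hZint : Integrable Z μ := hZ4.integrable (by norm_num)
  have herr : Integrable (fun ω => ‖Z ω - μ[Z | MeasurableSpace.comap Y inferInstance] ω‖ ^ 2) μ :=
    (hZ2.sub (hZ2.condExp one_le_two)).integrable_norm_pow two_ne_zero
  have hce := condExp_comap_ae_eq_setAverage hY hZint
  have hinner : ∫ ω in Sᶜ, ‖Z ω - μ[Z | MeasurableSpace.comap Y inferInstance] ω‖ ^ 2 ∂μ
      ≤ 4 * ε ^ 2 := by
    have hpt : ∀ᵐ ω ∂μ.restrict Sᶜ,
        ‖Z ω - μ[Z | MeasurableSpace.comap Y inferInstance] ω‖ ^ 2 ≤ 4 * ε ^ 2 := by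
      filter_upwards [ae_restrict_of_ae hce,
        ae_restrict_of_ae (ae_measure_preimage_singleton_ne_zero hY), ae_restrict_mem hS.compl]
        with ω hω hpos hωS
      obtain ⟨x, hx⟩ := hcell (Y ω) hωS
      have := norm_sub_setAverage_le_of_mapsTo (hY (measurableSet_singleton _)) hpos
        (measure_ne_top _ _) hZint.integrableOn (fun y hy => hx hy) rfl
      rw [hω]
      nlinarith [norm_nonneg (Z ω - ⨍ x in Y ⁻¹' {Y ω}, Z x ∂μ)]
    calc _ ≤ ∫ _ in Sᶜ, 4 * ε ^ 2 ∂μ := integral_mono_ae herr.integrableOn integrableOn_const hpt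
      _ ≤ 4 * ε ^ 2 := by
        rw [setIntegral_const, smul_eq_mul]
        exact mul_le_of_le_one_left (by positivity) measureReal_le_one
  have hover : ∫ ω in S, ‖Z ω - μ[Z | MeasurableSpace.comap Y inferInstance] ω‖ ^ 2 ∂μ
      ≤ 4 * √(μ.real {ω | q (Z ω) = o}) * √(∫ ω, ‖Z ω‖ ^ 4 ∂μ) := by
    have hcond : ∀ᵐ ω ∂μ, ω ∈ S →
        ‖Z ω - μ[Z | MeasurableSpace.comap Y inferInstance] ω‖ ^ 2
          = ‖Z ω - ⨍ x in S, Z x ∂μ‖ ^ 2 := by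
      filter_upwards [hce] with ω hω hωS
      rw [hω, show Y ω = o from hωS]
    rw [setIntegral_congr_ae hS hcond, mul_assoc]
    exact (setIntegral_norm_sub_setAverage_sq_le (measure_ne_top _ _) hZint.integrableOn
      (hZ2.integrable_norm_pow two_ne_zero).integrableOn).trans
        (by gcongr; exact setIntegral_norm_sq_le_sqrt_mul_sqrt hZ4 S)
  rw [← integral_add_compl hS herr]
  linarith

end QuantizationError

theorem stmt16_general {Ω : Type*} [MeasurableSpace Ω] (μ : Measure Ω) [IsProbabilityMeasure μ]
    {p : ℕ}
    (Z : Ω → EuclideanSpace ℝ (Fin p)) (hZ : Measurable Z) (hZ4 : MemLp Z 4 μ)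
    (v : ℝ)
    (htail : ∀ t : ℝ, 0 < t →
      (μ {ω | (∫ ω', ‖Z ω'‖ ∂μ) + t < ‖Z ω‖}).toReal ≤ Real.exp (-t ^ 2 / (2 * v)))
    (r : ℝ) (hr : (∫ ω', ‖Z ω'‖ ∂μ) < r) (k : ℕ) (hk : 0 < k) :
    ∃ q : EuclideanSpace ℝ (Fin p) → Fin (k + 1), Measurable q ∧
      ∫ ω, ‖Z ω - (μ[Z | MeasurableSpace.comap (fun ω => q (Z ω)) inferInstance]) ω‖ ^ 2 ∂μ
        ≤ 4 * (3 * r * (k : ℝ) ^ (-(1 : ℝ) / p)) ^ 2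
          + 4 * Real.sqrt (∫ ω, ‖Z ω‖ ^ 4 ∂μ)
              * Real.exp (-(r - ∫ ω', ‖Z ω'‖ ∂μ) ^ 2 / (4 * v)) := by
  set m := ∫ ω', ‖Z ω'‖ ∂μ
  have hr0 : 0 ≤ r := (integral_nonneg fun _ => norm_nonneg _).trans hr.le
  obtain ⟨c, hc⟩ := exists_fin_cover_closedBall (0 : EuclideanSpace ℝ (Fin p)) hr0 hk
  rw [finrank_euclideanSpace_fin] at hc
  set ε := 3 * r * (k : ℝ) ^ (-(1 : ℝ) / p)
  set q := coverQuantizer c ε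
  refine ⟨q, measurable_coverQuantizer c ε, ?_⟩
  have hoverflow : {ω | q (Z ω) = Fin.last k} ⊆ {ω | m + (r - m) < ‖Z ω‖} := fun ω hω => by
    rw [mem_ofPred_eq, add_sub_cancel, ← not_le, ← mem_closedBall_zero_iff]
    intro hZr
    obtain ⟨i, hi⟩ := mem_iUnion.1 (hc hZr)
    exact (lt_dist_of_coverQuantizer_eq_last c hω i).not_ge hi
  have hsqrt : √(μ.real {ω | q (Z ω) = Fin.last k}) ≤ Real.exp (-(r - m) ^ 2 / (4 * v)) :=
    calc _ ≤ √(Real.exp (-(r - m) ^ 2 / (2 * v))) :=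
          Real.sqrt_le_sqrt ((measureReal_mono hoverflow).trans (htail _ (sub_pos.2 hr)))
      _ = Real.exp (-(r - m) ^ 2 / (4 * v)) := by rw [← Real.exp_half]; ring_nf
  calc _ ≤ 4 * ε ^ 2 + 4 * √(μ.real {ω | q (Z ω) = Fin.last k}) * √(∫ ω, ‖Z ω‖ ^ 4 ∂μ) :=
        integral_norm_sub_condExp_sq_le hZ hZ4 (measurable_coverQuantizer c ε)
          fun i hi => ⟨_, coverQuantizer_preimage_subset_closedBall c ε hi⟩
    _ ≤ _ := by rw [mul_right_comm]; gcongr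

/-- High-resolution achievability bound under a subgaussian tail assumption on
`‖Z‖`: for every `r > E‖Z‖` and `k ≥ 1` there is a `(k+1)`-ary quantizer of `Z`
whose expected conditional-mean reconstruction error is at most
`4(3r k^{-1/p})² + 4√(E‖Z‖⁴) exp(-(r - E‖Z‖)²/(4v))`. -/
theorem stmt16 {Ω : Type*} [MeasurableSpace Ω] (μ : Measure Ω) [IsProbabilityMeasure μ]
    {p : ℕ} (hp : 0 < p)
    (Z : Ω → EuclideanSpace ℝ (Fin p)) (hZ : Measurable Z) (hZ4 : MemLp Z 4 μ)
    (v : ℝ) (hv : 0 < v)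
    (htail : ∀ t : ℝ, 0 < t →
      (μ {ω | (∫ ω', ‖Z ω'‖ ∂μ) + t < ‖Z ω‖}).toReal ≤ Real.exp (-t ^ 2 / (2 * v)))
    (r : ℝ) (hr : (∫ ω', ‖Z ω'‖ ∂μ) < r) (k : ℕ) (hk : 0 < k) :
    ∃ q : EuclideanSpace ℝ (Fin p) → Fin (k + 1), Measurable q ∧
      ∫ ω, ‖Z ω - (μ[Z | MeasurableSpace.comap (fun ω => q (Z ω)) inferInstance]) ω‖ ^ 2 ∂μ
        ≤ 4 * (3 * r * (k : ℝ) ^ (-(1 : ℝ) / p)) ^ 2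
          + 4 * Real.sqrt (∫ ω, ‖Z ω‖ ^ 4 ∂μ)
              * Real.exp (-(r - ∫ ω', ‖Z ω'‖ ∂μ) ^ 2 / (4 * v)) :=
  stmt16_general μ Z hZ hZ4 v htail r hr k hk
end

section
/- Let q : R^n → {1,...,k} be a measurable quantizer, X a random vector in R^n, and η(X) = E[Y|X] the regression function of a square-integrable Y. Define f_q(j) = E[Y | q(X) = j] and codebook C = {f_q(1),...,f_q(k)}. Then E||E[Y|X] - E[Y|q(X)]||^2 ≥ E[min_{j∈[k]} ||η(X) - f_q(j)||^2] = E||η(X) - q_C(η(X))||^2 evaluated with the nearest-neighbor quantizer q_C — in particular, E||E[Y|X] - E[Y|q(X)]||² ≥ inf over codebooks C' ⊂ R^p, |C'| = k, of E||η(X) - q_{C'}(η(X))||². -/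
open MeasureTheory ProbabilityTheory

/-!
Conditioned on the finite-valued `q(X)`, `E[Y | q(X)]` is a.e. the cell mean `f_q (q(X))`, so at
almost every point it is one of the `k` codepoints `f_q j`; hence `‖η - E[Y | q(X)]‖²` dominates
`min_j ‖η - f_q j‖²` pointwise. Enlarging `{f_q j}` to a codebook of exactly `k` points can only
lower the minimum. When no such codebook exists (`p = 0`, `k ≥ 2`) the infimum over codebooks is
the junk value `0`.
-/

section CellMean

variable {Ω E ι : Type*} [MeasurableSpace Ω] {μ : Measure Ω}
  [NormedAddCommGroup E] [NormedSpace ℝ E]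

lemma integral_cond_eq_inv_smul_setIntegral (s : Set Ω) (f : Ω → E) :
    ∫ x, f x ∂μ[|s] = (μ.real s)⁻¹ • ∫ x in s, f x ∂μ := by
  rw [ProbabilityTheory.cond, integral_smul_measure, ENNReal.toReal_inv, measureReal_def]

lemma measureReal_smul_integral_cond [IsFiniteMeasure μ] (s : Set Ω) (f : Ω → E) :
    μ.real s • ∫ x, f x ∂μ[|s] = ∫ x in s, f x ∂μ := by
  rw [integral_cond_eq_inv_smul_setIntegral]
  rcases eq_or_ne (μ s) 0 with hs | hs
  · simp [Measure.restrict_eq_zero.2 hs]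
  · exact smul_inv_smul₀ ((measureReal_ne_zero_iff (measure_ne_top μ s)).2 hs) _

variable [MeasurableSpace ι] [MeasurableSingletonClass ι] [Finite ι] {Z : Ω → ι} {f : Ω → E}

lemma setIntegral_preimage_eq_sum_fiber (hZ : Measurable Z) (hf : Integrable f μ) (S : Set ι) :
    ∫ x in Z ⁻¹' S, f x ∂μ = ∑ i ∈ (Set.toFinite S).toFinset, ∫ x in Z ⁻¹' {i}, f x ∂μ := by
  conv_lhs => rw [← (Set.toFinite S).coe_toFinset, ← Finset.set_biUnion_preimage_singleton]
  refine integral_biUnion_finset _ (fun i _ => hZ (measurableSet_singleton i)) ?_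
    (fun i _ => hf.integrableOn)
  exact fun i _ j _ hij => (Set.disjoint_singleton.2 hij).preimage Z

lemma condExp_comap_ae_eq_integral_cond [CompleteSpace E] [IsFiniteMeasure μ]
    (hZ : Measurable Z) (hf : Integrable f μ) :
    μ[f | MeasurableSpace.comap Z inferInstance] =ᵐ[μ] fun ω => ∫ x, f x ∂μ[|Z ⁻¹' {Z ω}] := by
  set c : ι → E := fun i => ∫ x, f x ∂μ[|Z ⁻¹' {i}]
  have hcZ : StronglyMeasurable[MeasurableSpace.comap Z inferInstance] (fun ω => c (Z ω)) :=
    StronglyMeasurable.of_discrete.comp_measurable (f := c) (comap_measurable Z)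
  have hcZ_int : Integrable (fun ω => c (Z ω)) μ := by
    obtain ⟨C, hC⟩ := (Set.finite_range fun i => ‖c i‖).bddAbove
    exact .of_bound (hcZ.mono hZ.comap_le).aestronglyMeasurable C
      (ae_of_all _ fun ω => hC ⟨Z ω, rfl⟩)
  refine (ae_eq_condExp_of_forall_setIntegral_eq hZ.comap_le hf
    (fun _ _ _ => hcZ_int.integrableOn) ?_ hcZ.aestronglyMeasurable).symm
  rintro _ ⟨S, -, rfl⟩ -
  rw [setIntegral_preimage_eq_sum_fiber hZ hcZ_int, setIntegral_preimage_eq_sum_fiber hZ hf]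
  refine Finset.sum_congr rfl fun i _ => ?_
  rw [setIntegral_congr_fun (hZ (measurableSet_singleton i))
    (fun ω (hω : Z ω = i) => congrArg c hω), setIntegral_const, measureReal_smul_integral_cond]

end CellMean

section Codebook

variable {Ω E ι : Type*} [MeasurableSpace Ω] {μ : Measure Ω} [NormedAddCommGroup E]
  {η g : Ω → E}

lemma integral_iInf_norm_sub_sq_le [Finite ι] (c : ι → E)
    (hint : Integrable (fun ω => ‖η ω - g ω‖ ^ 2) μ) (hg : ∀ᵐ ω ∂μ, g ω ∈ Set.range c) :
    ∫ ω, ⨅ i, ‖η ω - c i‖ ^ 2 ∂μ ≤ ∫ ω, ‖η ω - g ω‖ ^ 2 ∂μ :=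
  integral_mono_of_nonneg (ae_of_all _ fun ω => Real.iInf_nonneg fun i => by positivity) hint
    (hg.mono fun ω ⟨i, hi⟩ => (ciInf_le (Set.finite_range _).bddBelow i).trans_eq (by rw [hi]))

lemma iInf_card_eq_integral_iInf_norm_sub_sq_le {k : ℕ} {s : Finset E} (hs : s.card ≤ k)
    (hint : Integrable (fun ω => ‖η ω - g ω‖ ^ 2) μ) (hg : ∀ᵐ ω ∂μ, g ω ∈ s) :
    ⨅ C : {C : Finset E // C.card = k}, ∫ ω, ⨅ c : C.1, ‖η ω - c‖ ^ 2 ∂μ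
      ≤ ∫ ω, ‖η ω - g ω‖ ^ 2 ∂μ := by
  classical
  rcases isEmpty_or_nonempty {C : Finset E // C.card = k} with hE | ⟨C₀, rfl⟩
  · rw [Real.iInf_of_isEmpty]
    exact integral_nonneg fun ω => by positivity
  obtain ⟨C, hsC, -, hC⟩ := Finset.exists_subsuperset_card_eq Finset.subset_union_left hs
    (Finset.card_le_card (Finset.subset_union_right (s₁ := s)))
  have hbdd : BddBelow (Set.range fun C : {C : Finset E // C.card = C₀.card} =>
      ∫ ω, ⨅ c : C.1, ‖η ω - c‖ ^ 2 ∂μ) :=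
    ⟨0, Set.forall_mem_range.2 fun C =>
      integral_nonneg fun ω => Real.iInf_nonneg fun c => by positivity⟩
  refine (ciInf_le hbdd ⟨C, hC⟩).trans (integral_iInf_norm_sub_sq_le _ hint ?_)
  exact hg.mono fun ω hω => ⟨⟨g ω, hsC hω⟩, rfl⟩

end Codebook

theorem stmt18_general {Ω : Type*} [MeasurableSpace Ω] (μ : Measure Ω) [IsProbabilityMeasure μ]
    {n p k : ℕ}
    (X : Ω → EuclideanSpace ℝ (Fin n)) (Y : Ω → EuclideanSpace ℝ (Fin p))
    (hX : Measurable X) (hY2 : MemLp Y 2 μ)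
    (q : EuclideanSpace ℝ (Fin n) → Fin k) (hq : Measurable q)
    (η : Ω → EuclideanSpace ℝ (Fin p))
    (hη : η = μ[Y | MeasurableSpace.comap X inferInstance])
    (fq : Fin k → EuclideanSpace ℝ (Fin p))
    (hfq : ∀ j, fq j = ((μ {ω | q (X ω) = j}).toReal)⁻¹ •
        ∫ ω in {ω | q (X ω) = j}, Y ω ∂μ) :
    (∫ ω, ‖η ω - (μ[Y | MeasurableSpace.comap (fun ω => q (X ω)) inferInstance]) ω‖ ^ 2 ∂μ
        ≥ ∫ ω, ⨅ j : Fin k, ‖η ω - fq j‖ ^ 2 ∂μ)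
    ∧ ∫ ω, ‖η ω - (μ[Y | MeasurableSpace.comap (fun ω => q (X ω)) inferInstance]) ω‖ ^ 2 ∂μ
        ≥ ⨅ C : {C : Finset (EuclideanSpace ℝ (Fin p)) // C.card = k},
            ∫ ω, ⨅ c : C.1, ‖η ω - (c : EuclideanSpace ℝ (Fin p))‖ ^ 2 ∂μ := by
  have hcell : ∀ᵐ ω ∂μ,
      μ[Y | MeasurableSpace.comap (fun ω => q (X ω)) inferInstance] ω ∈ Set.range fq :=
    (condExp_comap_ae_eq_integral_cond (Z := fun ω => q (X ω)) (hq.comp hX)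
      (hY2.integrable one_le_two)).mono fun ω h =>
        ⟨q (X ω), by rw [h, hfq]; exact (integral_cond_eq_inv_smul_setIntegral _ _).symm⟩
  have hint : Integrable (fun ω => ‖η ω -
      μ[Y | MeasurableSpace.comap (fun ω => q (X ω)) inferInstance] ω‖ ^ 2) μ :=
    ((hη ▸ hY2.condExp one_le_two).sub (hY2.condExp one_le_two)).integrable_norm_pow two_ne_zero
  refine ⟨integral_iInf_norm_sub_sq_le fq hint hcell,
    iInf_card_eq_integral_iInf_norm_sub_sq_le (s := Finset.univ.image fq) ?_ hint ?_⟩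
  · exact Finset.card_image_le.trans (Finset.card_fin k).le
  · exact hcell.mono fun ω ⟨j, hj⟩ => hj ▸ Finset.mem_image_of_mem fq (Finset.mem_univ j)

/-- Converse half of the Ephraim–Gray reduction: for any measurable quantizer
`q` of `X`, with `f_q j = E[Y | q(X) = j]` (the conditional mean on each cell)
and `η(X) = E[Y|X]`, one has
`E‖E[Y|X] - E[Y|q(X)]‖² ≥ E[min_j ‖η(X) - f_q j‖²]`, and in particular the
left-hand side dominates the infimum over all size-`k` codebooks of the
expected squared distance from `η(X)` to the nearest codepoint. -/
theorem stmt18 {Ω : Type*} [MeasurableSpace Ω] (μ : Measure Ω) [IsProbabilityMeasure μ]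
    {n p k : ℕ} (hk : 0 < k)
    (X : Ω → EuclideanSpace ℝ (Fin n)) (Y : Ω → EuclideanSpace ℝ (Fin p))
    (hX : Measurable X) (hY : Measurable Y) (hY2 : MemLp Y 2 μ)
    (q : EuclideanSpace ℝ (Fin n) → Fin k) (hq : Measurable q)
    (η : Ω → EuclideanSpace ℝ (Fin p))
    (hη : η = μ[Y | MeasurableSpace.comap X inferInstance])
    (fq : Fin k → EuclideanSpace ℝ (Fin p))
    (hfq : ∀ j, fq j = ((μ {ω | q (X ω) = j}).toReal)⁻¹ •
        ∫ ω in {ω | q (X ω) = j}, Y ω ∂μ) :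
    (∫ ω, ‖η ω - (μ[Y | MeasurableSpace.comap (fun ω => q (X ω)) inferInstance]) ω‖ ^ 2 ∂μ
        ≥ ∫ ω, ⨅ j : Fin k, ‖η ω - fq j‖ ^ 2 ∂μ)
    ∧ ∫ ω, ‖η ω - (μ[Y | MeasurableSpace.comap (fun ω => q (X ω)) inferInstance]) ω‖ ^ 2 ∂μ
        ≥ ⨅ C : {C : Finset (EuclideanSpace ℝ (Fin p)) // C.card = k},
            ∫ ω, ⨅ c : C.1, ‖η ω - (c : EuclideanSpace ℝ (Fin p))‖ ^ 2 ∂μ :=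
  stmt18_general μ X Y hX hY2 q hq η hη fq hfq
end
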